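/- arXiv:2407.14315 — 5 statements merged into one kernel-verified Lean document; each statement's English description precedes it below -/
import Mathlib

section
/- A cooperative game with transferable utility on a finite player set has a nonempty core if and only if it is balanced; i.e., the core is nonempty iff for every balanced collection of coalitions with balancing weights, the weighted sum of coalition values does not exceed the value of the grand coalition (Bondareva–Shapley theorem). -/
/-!
The core is the solution set of the linear system `coalitionBound v ≤ coalitionMatrix *ᵥ x`.
By Farkas' lemma (in Gale's form) this system is infeasible exactly when a nonnegative
combination `μ` of its rows cancels every variable yet has positive right-hand side. Normalising
the coalition weights of `μ` by the weight of the grand-coalition row yields a balanced family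
violating balancedness; that weight can only vanish when `μ` lives on the empty coalition, where
`v ∅ = 0`. Farkas' lemma follows from the separation theorem for closed cones: a finitely
generated cone is closed because, by the conic Carathéodory theorem, it is a finite union of
images of orthants under injective linear maps.
-/

open Finset Matrix

namespace PointedCone

section Caratheodory

variable {E : Type*} [AddCommGroup E] [Module ℝ E] {x : E}

lemma mem_hull_finset_iff {t : Finset E} :
    x ∈ hull ℝ (t : Set E) ↔ ∃ c : E → ℝ, (∀ y ∈ t, 0 ≤ c y) ∧ ∑ y ∈ t, c y • y = x := by
  constructor
  · intro hx
    obtain ⟨c, -, rfl⟩ := Submodule.mem_span_finset.mp hx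
    exact ⟨fun y => c y, fun y _ => (c y).2, by simp only [Nonneg.coe_smul]⟩
  · rintro ⟨c, hc, rfl⟩
    exact Submodule.sum_mem _ fun y hy => smul_mem _ (hc y hy) (subset_hull hy)

lemma mem_hull_erase [DecidableEq E] {t : Finset E} (h : ¬LinearIndepOn ℝ id (t : Set E))
    (hx : x ∈ hull ℝ (t : Set E)) : ∃ y ∈ t, x ∈ hull ℝ (t.erase y : Set E) := by
  obtain ⟨c, hc, rfl⟩ := mem_hull_finset_iff.mp hx
  obtain ⟨g, hg, i, hi, hgi⟩ : ∃ g : E → ℝ, ∑ y ∈ t, g y • y = 0 ∧ ∃ i ∈ t, 0 < g i := by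
    simp only [linearIndepOn_finset_iff, id, not_forall] at h
    obtain ⟨g, hg, i, hi, hgi⟩ := h
    rcases lt_or_gt_of_ne hgi with hneg | hpos
    · exact ⟨-g, by simp [neg_smul, hg], i, hi, by simpa using hneg⟩
    · exact ⟨g, hg, i, hi, hpos⟩
  obtain ⟨y, hy, hmin⟩ := (t.filter (0 < g ·)).exists_min_image (fun z => c z / g z)
    ⟨i, mem_filter.mpr ⟨hi, hgi⟩⟩
  rw [mem_filter] at hy
  -- subtracting `θ • g` keeps every coefficient nonnegative and kills the one at `y`
  set θ := c y / g y
  refine ⟨y, hy.1, mem_hull_finset_iff.mpr ⟨fun z => c z - θ * g z, fun z hz => ?_, ?_⟩⟩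
  · have hz := mem_of_mem_erase hz
    rcases lt_or_ge 0 (g z) with hgz | hgz
    · have := hmin z (mem_filter.mpr ⟨hz, hgz⟩)
      rw [le_div_iff₀ hgz] at this
      linarith
    · nlinarith [hc z hz, div_nonneg (hc y hy.1) hy.2.le]
  · have hθ : c y - θ * g y = 0 := by rw [div_mul_cancel₀ _ hy.2.ne', sub_self]
    rw [sum_erase t (f := fun z => (c z - θ * g z) • z) (by simp only [hθ, zero_smul])]
    simp only [sub_smul, sum_sub_distrib, mul_smul, ← smul_sum, hg, smul_zero, sub_zero]

theorem exists_linearIndepOn_subset_of_mem_hull {s : Finset E} (hx : x ∈ hull ℝ (s : Set E)) :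
    ∃ t ⊆ s, LinearIndepOn ℝ id (t : Set E) ∧ x ∈ hull ℝ (t : Set E) := by
  classical
  induction s using Finset.strongInduction with
  | H s ih =>
    by_cases h : LinearIndepOn ℝ id (s : Set E)
    · exact ⟨s, Subset.rfl, h, hx⟩
    · obtain ⟨y, hy, hxy⟩ := mem_hull_erase h hx
      obtain ⟨t, hts, ht, hxt⟩ := ih _ (erase_ssubset hy) hxy
      exact ⟨t, hts.trans (erase_subset y s), ht, hxt⟩

lemma coe_hull_range_eq_image {ι : Type*} [Fintype ι] (v : ι → E) :
    (hull ℝ (Set.range v) : Set E) = Fintype.linearCombination ℝ v '' Set.Ici 0 := by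
  ext x
  simp only [SetLike.mem_coe, Submodule.mem_span_range_iff_exists_fun, Set.mem_image, Set.mem_Ici,
    Fintype.linearCombination_apply]
  constructor
  · rintro ⟨c, rfl⟩
    exact ⟨fun i => c i, fun i => (c i).2, by simp only [Nonneg.coe_smul]⟩
  · rintro ⟨c, hc, rfl⟩
    exact ⟨fun i => ⟨c i, hc i⟩, by simp only [← Nonneg.coe_smul]⟩

end Caratheodory

section Topology

variable {E : Type*} [AddCommGroup E] [Module ℝ E] [TopologicalSpace E] [IsTopologicalAddGroup E]
  [ContinuousSMul ℝ E] [T2Space E]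

lemma isClosed_hull_range_of_linearIndependent {ι : Type*} [Fintype ι] {v : ι → E}
    (hv : LinearIndependent ℝ v) : IsClosed (hull ℝ (Set.range v) : Set E) := by
  rw [coe_hull_range_eq_image]
  refine (LinearMap.isClosedEmbedding_of_injective ?_).isClosedMap _ isClosed_Ici
  exact LinearMap.ker_eq_bot.mpr (linearIndependent_iff_injective_fintypeLinearCombination.mp hv)

theorem isClosed_hull_finset (s : Finset E) : IsClosed (hull ℝ (s : Set E) : Set E) := by
  classical
  have hunion : (hull ℝ (s : Set E) : Set E) =
      ⋃ (t : Finset E) (_ : t ∈ s.powerset.filter fun t : Finset E =>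
        LinearIndepOn ℝ id (t : Set E)), (hull ℝ (t : Set E) : Set E) := by
    refine Set.Subset.antisymm (fun x hx => ?_) (Set.iUnion₂_subset fun t ht => ?_)
    · obtain ⟨t, hts, ht, hxt⟩ := exists_linearIndepOn_subset_of_mem_hull hx
      exact Set.mem_iUnion₂.mpr ⟨t, mem_filter.mpr ⟨mem_powerset.mpr hts, ht⟩, hxt⟩
    · exact Submodule.span_mono (by simpa using (mem_filter.mp ht).1)
  rw [hunion]
  refine isClosed_biUnion_finset fun t ht => ?_
  simpa using isClosed_hull_range_of_linearIndependent (mem_filter.mp ht).2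

variable [LocallyConvexSpace ℝ E]

theorem hyperplane_separation_point_of_finite {s : Set E} (hs : s.Finite) {x₀ : E}
    (hx₀ : x₀ ∉ hull ℝ s) : ∃ f : StrongDual ℝ E, (∀ x ∈ s, 0 ≤ f x) ∧ f x₀ < 0 := by
  rw [← hs.coe_toFinset] at hx₀ ⊢
  obtain ⟨f, hf, hfx₀⟩ :=
    ProperCone.hyperplane_separation_point ⟨hull ℝ _, isClosed_hull_finset hs.toFinset⟩ hx₀
  exact ⟨f, fun x hx => hf x (subset_hull hx), hfx₀⟩

end Topology

end PointedCone

lemma StrongDual.pi_apply_eq_dotProduct {J : Type*} [Fintype J] [DecidableEq J]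
    (f : StrongDual ℝ (J → ℝ)) (y : J → ℝ) : f y = (fun j => f (Pi.single j 1)) ⬝ᵥ y := by
  conv_lhs => rw [← Finset.univ_sum_single y]
  simp only [map_sum, dotProduct]
  refine sum_congr rfl fun j _ => ?_
  have : Pi.single j (y j) = y j • Pi.single j (1 : ℝ) := by
    rw [← Pi.single_smul', smul_eq_mul, mul_one]
  rw [this, map_smul, smul_eq_mul, mul_comm]

namespace Matrix

lemma exists_le_mulVec_of_mem_hull {J K : Type*} [DecidableEq J] [Fintype K] [DecidableEq K]
    (A : Matrix J K ℝ) {y : J → ℝ}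
    (hy : y ∈ PointedCone.hull ℝ
      (Set.range A.col ∪ Set.range (-A.col) ∪ Set.range fun j => -Pi.single j 1)) :
    ∃ x, y ≤ A *ᵥ x := by
  induction hy using Submodule.span_induction with
  | mem y hy =>
    rcases hy with (⟨k, rfl⟩ | ⟨k, rfl⟩) | ⟨j, rfl⟩
    · exact ⟨Pi.single k 1, by rw [mulVec_single_one]⟩
    · exact ⟨-Pi.single k 1, by rw [mulVec_neg, mulVec_single_one]; rfl⟩
    · exact ⟨0, by rw [mulVec_zero, neg_nonpos]; exact Pi.single_nonneg.mpr zero_le_one⟩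
  | zero => exact ⟨0, by rw [mulVec_zero]⟩
  | add y z _ _ hy hz =>
    obtain ⟨⟨x, hx⟩, ⟨x', hx'⟩⟩ := And.intro hy hz
    exact ⟨x + x', by rw [mulVec_add]; exact add_le_add hx hx'⟩
  | smul c y _ hy =>
    obtain ⟨x, hx⟩ := hy
    exact ⟨(c : ℝ) • x, by
      rw [mulVec_smul, ← Nonneg.coe_smul]; exact smul_le_smul_of_nonneg_left hx c.2⟩

theorem exists_le_mulVec_iff {J K : Type*} [Fintype J] [Fintype K] (A : Matrix J K ℝ)
    (b : J → ℝ) :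
    (∃ x, b ≤ A *ᵥ x) ↔ ∀ μ : J → ℝ, 0 ≤ μ → μ ᵥ* A = 0 → μ ⬝ᵥ b ≤ 0 := by
  classical
  constructor
  · rintro ⟨x, hx⟩ μ hμ hμA
    calc μ ⬝ᵥ b ≤ μ ⬝ᵥ (A *ᵥ x) := dotProduct_le_dotProduct_of_nonneg_left hx hμ
      _ = 0 := by rw [dotProduct_mulVec, hμA, zero_dotProduct]
  · contrapose!
    intro hb
    obtain ⟨f, hf, hfb⟩ := PointedCone.hyperplane_separation_point_of_finite
      (((Set.finite_range _).union (Set.finite_range _)).union (Set.finite_range _))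
      fun hmem => (exists_le_mulVec_of_mem_hull A hmem).elim hb
    set φ : J → ℝ := fun j => f (Pi.single j 1)
    have hcol : ∀ k, φ ⬝ᵥ A.col k = 0 := fun k => by
      rw [← StrongDual.pi_apply_eq_dotProduct]
      exact le_antisymm (by simpa using hf (-A.col k) (.inl (.inr ⟨k, rfl⟩)))
        (hf (A.col k) (.inl (.inl ⟨k, rfl⟩)))
    refine ⟨-φ, fun j => ?_, ?_, ?_⟩
    · simpa using hf (-Pi.single j 1) (.inr ⟨j, rfl⟩)
    · ext k
      change -φ ⬝ᵥ A.col k = 0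
      rw [neg_dotProduct, hcol k, neg_zero]
    · rwa [neg_dotProduct, ← StrongDual.pi_apply_eq_dotProduct, neg_pos]

end Matrix

namespace CooperativeGame

variable {ι : Type*} [Fintype ι]

def coalitionBound (v : Finset ι → ℝ) : Option (Finset ι) → ℝ
  | some S => v S
  | none => -v univ

lemma dotProduct_coalitionBound (μ : Option (Finset ι) → ℝ) (v : Finset ι → ℝ) :
    μ ⬝ᵥ coalitionBound v = ∑ S, μ (some S) * v S - μ none * v univ := by
  simp [coalitionBound, dotProduct, Fintype.sum_option, sub_eq_neg_add]

variable [DecidableEq ι]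

/-- Row `some S` encodes the constraint `v S ≤ ∑ i ∈ S, x i` and row `none` the constraint
`∑ i, x i ≤ v univ`. -/
def coalitionMatrix : Matrix (Option (Finset ι)) ι ℝ
  | some S, i => if i ∈ S then 1 else 0
  | none, _ => -1

@[simp]
lemma coalitionMatrix_mulVec_some (x : ι → ℝ) (S : Finset ι) :
    (coalitionMatrix *ᵥ x) (some S) = ∑ i ∈ S, x i := by
  simp [coalitionMatrix, mulVec, dotProduct, Finset.sum_ite_mem]

@[simp]
lemma coalitionMatrix_mulVec_none (x : ι → ℝ) : (coalitionMatrix *ᵥ x) none = -∑ i, x i := by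
  simp [coalitionMatrix, mulVec, dotProduct]

lemma vecMul_coalitionMatrix (μ : Option (Finset ι) → ℝ) (i : ι) :
    (μ ᵥ* coalitionMatrix) i = ∑ S ∈ univ.filter (i ∈ ·), μ (some S) - μ none := by
  simp [coalitionMatrix, vecMul, dotProduct, Fintype.sum_option, sum_filter, sub_eq_neg_add]

lemma exists_core_iff (v : Finset ι → ℝ) :
    (∃ x : ι → ℝ, ∑ i, x i = v univ ∧ ∀ S, v S ≤ ∑ i ∈ S, x i) ↔
      ∃ x, coalitionBound v ≤ coalitionMatrix *ᵥ x := by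
  refine exists_congr fun x => ⟨fun ⟨hsum, hS⟩ => ?_, fun h => ?_⟩
  · rintro (_ | S)
    · simp [coalitionBound, hsum]
    · simpa [coalitionBound] using hS S
  · have hS : ∀ S, v S ≤ ∑ i ∈ S, x i := fun S => by simpa [coalitionBound] using h (some S)
    have hN : ∑ i, x i ≤ v univ := by simpa [coalitionBound] using h none
    exact ⟨le_antisymm hN (hS univ), hS⟩

lemma balanced_iff (v : Finset ι → ℝ) (hv0 : v ∅ = 0) :
    (∀ lam : Finset ι → ℝ, (∀ S, 0 ≤ lam S) →
      (∀ i : ι, ∑ S ∈ univ.filter (fun S : Finset ι => i ∈ S), lam S = 1) →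
      ∑ S : Finset ι, lam S * v S ≤ v univ) ↔
    ∀ μ, 0 ≤ μ → μ ᵥ* coalitionMatrix = 0 → μ ⬝ᵥ coalitionBound v ≤ 0 := by
  simp only [funext_iff, vecMul_coalitionMatrix, Pi.zero_apply, sub_eq_zero,
    dotProduct_coalitionBound, sub_nonpos]
  refine ⟨fun hbal μ hμ hμA => ?_, fun h lam hlam hbal => ?_⟩
  · rcases (hμ none).eq_or_lt with hzero | hpos
    · have hμS : ∀ S : Finset ι, S.Nonempty → μ (some S) = 0 := by
        rintro S ⟨i, hi⟩
        exact (sum_eq_zero_iff_of_nonneg fun S _ => hμ (some S)).mp ((hμA i).trans hzero.symm) S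
          (mem_filter.mpr ⟨mem_univ S, hi⟩)
      rw [← hzero, Pi.zero_apply, zero_mul, sum_eq_zero fun S _ => ?_]
      rcases S.eq_empty_or_nonempty with rfl | hS
      · rw [hv0, mul_zero]
      · rw [hμS S hS, zero_mul]
    · have := hbal (fun S => μ (some S) / μ none) (fun S => div_nonneg (hμ _) hpos.le)
        fun i => by rw [← sum_div, hμA i, div_self hpos.ne']
      simp only [div_mul_eq_mul_div, ← sum_div, div_le_iff₀ hpos] at this
      linarith
  · simpa using h (Option.elim · 1 lam) (fun o => o.rec zero_le_one hlam) hbal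

end CooperativeGame

/-- Bondareva–Shapley theorem: a TU game has a nonempty core iff it is balanced. -/
theorem bondareva_shapley {ι : Type*} [Fintype ι] [DecidableEq ι]
    (v : Finset ι → ℝ) (hv0 : v ∅ = 0) :
    (∃ x : ι → ℝ, ∑ i, x i = v Finset.univ ∧ ∀ S : Finset ι, v S ≤ ∑ i ∈ S, x i) ↔
    (∀ lam : Finset ι → ℝ, (∀ S, 0 ≤ lam S) →
      (∀ i : ι, ∑ S ∈ Finset.univ.filter (fun S : Finset ι => i ∈ S), lam S = 1) →
      ∑ S : Finset ι, lam S * v S ≤ v Finset.univ) := by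
  rw [CooperativeGame.exists_core_iff, Matrix.exists_le_mulVec_iff]
  exact (CooperativeGame.balanced_iff v hv0).symm
end

section
/- For a finite linear programming problem, strong duality holds: if both the primal problem (maximize cᵀx subject to Ax ≤ b, x ≥ 0) and its dual (minimize bᵀy subject to Aᵀy ≥ c, y ≥ 0) are feasible, then both have optimal solutions and the optimal values are equal. -/
open scoped Matrix

open Finset

/-- Farkas lemma, cone form, elementary proof by induction on the number of
generators. -/
theorem farkas_cone {ρ : Type*} [Fintype ρ] :
    ∀ (q : ℕ) (v : Fin q → ρ → ℝ) (b : ρ → ℝ),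
    (∃ x : Fin q → ℝ, (∀ j, 0 ≤ x j) ∧ ∀ i, ∑ j, x j * v j i = b i) ∨
    (∃ y : ρ → ℝ, (∀ j, 0 ≤ ∑ i, v j i * y i) ∧ ∑ i, b i * y i < 0) := by
  intro q
  induction q with
  | zero =>
    intro v b
    by_cases hb : ∀ i, b i = 0
    · exact Or.inl ⟨0, fun j => le_rfl, fun i => by simp [hb i]⟩
    · refine Or.inr ⟨fun i => -b i, fun j => j.elim0, ?_⟩
      push_neg at hb
      obtain ⟨i0, hi0⟩ := hb
      have : (0:ℝ) < ∑ i, b i * b i := by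
        apply Finset.sum_pos' (fun i _ => mul_self_nonneg _)
        exact ⟨i0, Finset.mem_univ _, mul_self_pos.mpr hi0⟩
      have : ∑ i, b i * -b i = -∑ i, b i * b i := by
        simp [mul_neg, Finset.sum_neg_distrib]
      linarith [this]
  | succ q IH =>
    intro v b
    set w : Fin q → ρ → ℝ := fun j => v j.castSucc with hw
    set vl : ρ → ℝ := v (Fin.last q) with hvl
    rcases IH w b with ⟨x, hx0, hxs⟩ | ⟨y, hy0, hyb⟩
    · refine Or.inl ⟨Fin.snoc x 0, ?_, ?_⟩
      · intro j
        refine Fin.lastCases ?_ ?_ j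
        · simp
        · intro j'; simpa using hx0 j'
      · intro i
        rw [Fin.sum_univ_castSucc]
        simpa using hxs i
    · by_cases hl : 0 ≤ ∑ i, vl i * y i
      · refine Or.inr ⟨y, ?_, hyb⟩
        intro j
        refine Fin.lastCases ?_ ?_ j
        · exact hl
        · intro j'; exact hy0 j'
      · push_neg at hl
        set α : ℝ := ∑ i, vl i * y i with hα
        have hαne : α ≠ 0 := ne_of_lt hl
        set w' : Fin q → ρ → ℝ :=
          fun j i => w j i - ((∑ i, w j i * y i) / α) * vl i with hw'
        set b' : ρ → ℝ := fun i => b i - ((∑ i, b i * y i) / α) * vl i with hb'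
        rcases IH w' b' with ⟨x, hx0, hxs⟩ | ⟨y', hy'0, hy'b⟩
        · -- reconstruct a conic combination for b
          set μ : ℝ := ((∑ i, b i * y i) - ∑ j, x j * ∑ i, w j i * y i) / α with hμ
          have hμ0 : 0 ≤ μ := by
            have hnum : (∑ i, b i * y i) - (∑ j, x j * ∑ i, w j i * y i) < 0 := by
              have h1 : 0 ≤ ∑ j, x j * ∑ i, w j i * y i :=
                Finset.sum_nonneg fun j _ => mul_nonneg (hx0 j) (hy0 j)
              linarith
            exact le_of_lt (div_pos_of_neg_of_neg hnum hl)
          refine Or.inl ⟨Fin.snoc x μ, ?_, ?_⟩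
          · intro j
            refine Fin.lastCases ?_ ?_ j
            · simpa using hμ0
            · intro j'; simpa using hx0 j'
          · intro i
            rw [Fin.sum_univ_castSucc]
            simp only [Fin.snoc_castSucc, Fin.snoc_last]
            have h1 := hxs i
            have hexp : ∑ j, x j * w' j i
                = (∑ j, x j * w j i)
                  - ((∑ j, x j * ∑ i, w j i * y i) / α) * vl i := by
              rw [Finset.sum_div, Finset.sum_mul]
              rw [← Finset.sum_sub_distrib]
              apply Finset.sum_congr rfl
              intro j _
              simp only [hw']
              field_simp
            rw [hexp, hb'] at h1
            have : (∑ j, x j * w j i) =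
                b i - ((∑ i, b i * y i) / α) * vl i
                  + ((∑ j, x j * ∑ i, w j i * y i) / α) * vl i := by linarith
            rw [this, hμ]
            field_simp
            ring
        · -- build a separating functional for the full system
          set t : ℝ := (∑ i, vl i * y' i) / α with ht
          refine Or.inr ⟨fun i => y' i - t * y i, ?_, ?_⟩
          · intro j
            have key : ∀ u : ρ → ℝ,
                ∑ i, u i * (y' i - t * y i)
                  = (∑ i, u i * y' i) - t * ∑ i, u i * y i := by
              intro u
              rw [Finset.mul_sum, ← Finset.sum_sub_distrib]
              apply Finset.sum_congr rfl
              intro i _; ring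
            refine Fin.lastCases ?_ ?_ j
            · rw [key vl]
              have h2 : t * ∑ i, vl i * y i = ∑ i, vl i * y' i := by
                rw [ht, ← hα, div_mul_cancel₀ _ hαne]
              linarith
            · intro j'
              rw [key (w j')]
              have := hy'0 j'
              have hexp : ∑ i, w' j' i * y' i
                  = (∑ i, w j' i * y' i)
                    - ((∑ i, w j' i * y i) / α) * ∑ i, vl i * y' i := by
                rw [hw', Finset.mul_sum, ← Finset.sum_sub_distrib]
                exact Finset.sum_congr rfl fun i _ => by ring
              have ht' : t * ∑ i, w j' i * y i
                  = ((∑ i, w j' i * y i) / α) * ∑ i, vl i * y' i := by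
                rw [ht]; ring
              linarith
          · have key : ∑ i, b i * (y' i - t * y i)
                = (∑ i, b i * y' i) - t * ∑ i, b i * y i := by
              rw [Finset.mul_sum, ← Finset.sum_sub_distrib]
              exact Finset.sum_congr rfl fun i _ => by ring
            have hexp : ∑ i, b' i * y' i
                = (∑ i, b i * y' i)
                  - ((∑ i, b i * y i) / α) * ∑ i, vl i * y' i := by
              rw [hb', Finset.mul_sum, ← Finset.sum_sub_distrib]
              exact Finset.sum_congr rfl fun i _ => by ring
            have ht' : t * ∑ i, b i * y i
                = ((∑ i, b i * y i) / α) * ∑ i, vl i * y' i := by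
              rw [ht]; ring
            linarith

/-- Farkas lemma, cone form, arbitrary finite index type. -/
theorem farkas_cone' {ρ ι : Type*} [Fintype ρ] [Fintype ι]
    (v : ι → ρ → ℝ) (b : ρ → ℝ) :
    (∃ x : ι → ℝ, (∀ j, 0 ≤ x j) ∧ ∀ i, ∑ j, x j * v j i = b i) ∨
    (∃ y : ρ → ℝ, (∀ j, 0 ≤ ∑ i, v j i * y i) ∧ ∑ i, b i * y i < 0) := by
  obtain ⟨e⟩ : Nonempty (ι ≃ Fin (Fintype.card ι)) := ⟨Fintype.equivFin ι⟩
  rcases farkas_cone (Fintype.card ι) (fun k => v (e.symm k)) b with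
      ⟨x, hx0, hxs⟩ | ⟨y, hy0, hyb⟩
  · refine Or.inl ⟨fun j => x (e j), fun j => hx0 _, fun i => ?_⟩
    rw [← hxs i]
    rw [← Equiv.sum_comp e (fun k => x k * v (e.symm k) i)]
    simp
  · refine Or.inr ⟨y, fun j => ?_, hyb⟩
    have := hy0 (e j)
    simpa using this

/-- Farkas lemma, inequality form. -/
theorem farkas_le {ρ ι : Type*} [Fintype ρ] [Fintype ι] [DecidableEq ρ]
    (M : ρ → ι → ℝ) (d : ρ → ℝ) :
    (∃ x : ι → ℝ, (∀ j, 0 ≤ x j) ∧ ∀ i, ∑ j, M i j * x j ≤ d i) ∨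
    (∃ u : ρ → ℝ, (∀ i, 0 ≤ u i) ∧ (∀ j, 0 ≤ ∑ i, M i j * u i) ∧
      ∑ i, d i * u i < 0) := by
  -- columns of M together with the standard basis vectors (slack variables)
  set v : ι ⊕ ρ → ρ → ℝ :=
    Sum.elim (fun j i => M i j) (fun i' => Pi.single i' 1) with hv
  rcases farkas_cone' v d with ⟨x, hx0, hxs⟩ | ⟨y, hy0, hyb⟩
  · refine Or.inl ⟨fun j => x (Sum.inl j), fun j => hx0 _, fun i => ?_⟩
    have h := hxs i
    rw [Fintype.sum_sum_type] at h
    have hs : ∑ i' : ρ, x (Sum.inr i') * v (Sum.inr i') i = x (Sum.inr i) := by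
      rw [hv]
      simp only [Sum.elim_inr]
      rw [Finset.sum_eq_single i]
      · simp
      · intro b' _ hb'; simp [Pi.single_apply, Ne.symm hb']
      · simp
    rw [hs] at h
    have : ∑ j, M i j * x (Sum.inl j) = ∑ j, x (Sum.inl j) * v (Sum.inl j) i := by
      apply Finset.sum_congr rfl; intro j _; rw [hv]; simp [mul_comm]
    rw [this]
    have := hx0 (Sum.inr i)
    linarith
  · refine Or.inr ⟨y, ?_, ?_, hyb⟩
    · intro i
      have := hy0 (Sum.inr i)
      rw [hv] at this
      simpa [Pi.single_apply] using this
    · intro j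
      have := hy0 (Sum.inl j)
      rw [hv] at this
      simpa using this

open scoped Matrix

lemma sum_swap_mul {m n : ℕ} (A : Matrix (Fin m) (Fin n) ℝ) (x : Fin n → ℝ)
    (y : Fin m → ℝ) :
    ∑ i, (∑ j, A i j * x j) * y i = ∑ j, (∑ i, A i j * y i) * x j := by
  simp only [Finset.sum_mul]
  rw [Finset.sum_comm]
  exact Finset.sum_congr rfl fun j _ => Finset.sum_congr rfl fun i _ => by ring

lemma lp_weak_duality {m n : ℕ} (A : Matrix (Fin m) (Fin n) ℝ)
    (b : Fin m → ℝ) (c : Fin n → ℝ) {x : Fin n → ℝ} {y : Fin m → ℝ}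
    (hx0 : ∀ j, 0 ≤ x j) (hxA : ∀ i, A.mulVec x i ≤ b i)
    (hy0 : ∀ i, 0 ≤ y i) (hyA : ∀ j, c j ≤ Aᵀ.mulVec y j) :
    c ⬝ᵥ x ≤ b ⬝ᵥ y := by
  have hmul : ∀ i, A.mulVec x i = ∑ j, A i j * x j := fun i => by
    simp [Matrix.mulVec, dotProduct]
  have hmulT : ∀ j, Aᵀ.mulVec y j = ∑ i, A i j * y i := fun j => by
    simp [Matrix.mulVec, dotProduct, Matrix.transpose_apply]
  calc c ⬝ᵥ x = ∑ j, c j * x j := by simp [dotProduct]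
    _ ≤ ∑ j, (∑ i, A i j * y i) * x j := Finset.sum_le_sum fun j _ =>
        mul_le_mul_of_nonneg_right (by rw [← hmulT j]; exact hyA j) (hx0 j)
    _ = ∑ i, (∑ j, A i j * x j) * y i := (sum_swap_mul A x y).symm
    _ ≤ ∑ i, b i * y i := Finset.sum_le_sum fun i _ =>
        mul_le_mul_of_nonneg_right (by rw [← hmul i]; exact hxA i) (hy0 i)
    _ = b ⬝ᵥ y := by simp [dotProduct]


/-- Strong duality for linear programming: if both the primal and the dual are
feasible, then both have optimal solutions and the optimal values coincide. -/
theorem lp_strong_duality {m n : ℕ} (A : Matrix (Fin m) (Fin n) ℝ)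
    (b : Fin m → ℝ) (c : Fin n → ℝ)
    (hP : ∃ x : Fin n → ℝ, (∀ j, 0 ≤ x j) ∧ ∀ i, A.mulVec x i ≤ b i)
    (hD : ∃ y : Fin m → ℝ, (∀ i, 0 ≤ y i) ∧ ∀ j, c j ≤ Aᵀ.mulVec y j) :
    ∃ x : Fin n → ℝ, ∃ y : Fin m → ℝ,
      ((∀ j, 0 ≤ x j) ∧ ∀ i, A.mulVec x i ≤ b i) ∧
      ((∀ i, 0 ≤ y i) ∧ ∀ j, c j ≤ Aᵀ.mulVec y j) ∧
      (∀ x' : Fin n → ℝ, ((∀ j, 0 ≤ x' j) ∧ ∀ i, A.mulVec x' i ≤ b i) →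
        c ⬝ᵥ x' ≤ c ⬝ᵥ x) ∧
      (∀ y' : Fin m → ℝ, ((∀ i, 0 ≤ y' i) ∧ ∀ j, c j ≤ Aᵀ.mulVec y' j) →
        b ⬝ᵥ y ≤ b ⬝ᵥ y') ∧
      c ⬝ᵥ x = b ⬝ᵥ y := by
  have hmul : ∀ (x : Fin n → ℝ) i, A.mulVec x i = ∑ j, A i j * x j := fun x i => by
    simp [Matrix.mulVec, dotProduct]
  have hmulT : ∀ (y : Fin m → ℝ) j, Aᵀ.mulVec y j = ∑ i, A i j * y i := fun y j => by
    simp [Matrix.mulVec, dotProduct, Matrix.transpose_apply]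
  set M' : (Fin m ⊕ (Fin n ⊕ Unit)) → (Fin n ⊕ Fin m) → ℝ :=
    Sum.elim (fun i => Sum.elim (fun j => A i j) (fun _ => 0))
      (Sum.elim (fun j' => Sum.elim (fun _ => (0:ℝ)) (fun i => -A i j'))
        (fun _ => Sum.elim (fun j => -c j) (fun i => b i))) with hM'
  set d' : Fin m ⊕ (Fin n ⊕ Unit) → ℝ :=
    Sum.elim b (Sum.elim (fun j => -c j) (fun _ => 0)) with hd'
  rcases farkas_le M' d' with ⟨z, hz0, hzle⟩ | ⟨u, hu0, hucol, huobj⟩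
  · -- the combined system is feasible: extract optimal pair
    set x : Fin n → ℝ := fun j => z (Sum.inl j) with hx
    set y : Fin m → ℝ := fun i => z (Sum.inr i) with hy
    have hx0 : ∀ j, 0 ≤ x j := fun j => hz0 _
    have hy0 : ∀ i, 0 ≤ y i := fun i => hz0 _
    have hxA : ∀ i, A.mulVec x i ≤ b i := by
      intro i
      have h := hzle (Sum.inl i)
      rw [hM', hd'] at h
      simp only [Sum.elim_inl, Sum.elim_inr, Fintype.sum_sum_type] at h
      rw [hmul]
      simpa using h
    have hyA : ∀ j, c j ≤ Aᵀ.mulVec y j := by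
      intro j
      have h := hzle (Sum.inr (Sum.inl j))
      rw [hM', hd'] at h
      simp only [Sum.elim_inl, Sum.elim_inr, Fintype.sum_sum_type] at h
      rw [hmulT]
      simp only [neg_mul, Finset.sum_neg_distrib, zero_mul, Finset.sum_const_zero,
        zero_add] at h
      have : ∑ i, A i j * y i = ∑ i, A i j * z (Sum.inr i) := rfl
      linarith [h]
    have hobj : b ⬝ᵥ y ≤ c ⬝ᵥ x := by
      have h := hzle (Sum.inr (Sum.inr ()))
      rw [hM', hd'] at h
      simp only [Sum.elim_inl, Sum.elim_inr, Fintype.sum_sum_type, neg_mul,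
        Finset.sum_neg_distrib] at h
      simp only [dotProduct]
      have hc : ∑ j, c j * x j = ∑ j, c j * z (Sum.inl j) := rfl
      have hb : ∑ i, b i * y i = ∑ i, b i * z (Sum.inr i) := rfl
      linarith [h]
    have heq : c ⬝ᵥ x = b ⬝ᵥ y :=
      le_antisymm (lp_weak_duality A b c hx0 hxA hy0 hyA) hobj
    refine ⟨x, y, ⟨hx0, hxA⟩, ⟨hy0, hyA⟩, ?_, ?_, heq⟩
    · intro x' ⟨hx'0, hx'A⟩
      calc c ⬝ᵥ x' ≤ b ⬝ᵥ y := lp_weak_duality A b c hx'0 hx'A hy0 hyA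
        _ = c ⬝ᵥ x := heq.symm
    · intro y' ⟨hy'0, hy'A⟩
      calc b ⬝ᵥ y = c ⬝ᵥ x := heq.symm
        _ ≤ b ⬝ᵥ y' := lp_weak_duality A b c hx0 hxA hy'0 hy'A
  · -- infeasibility of the combined system contradicts feasibility of P and D
    exfalso
    obtain ⟨x₀, hx₀0, hx₀A⟩ := hP
    obtain ⟨y₀, hy₀0, hy₀A⟩ := hD
    set y' : Fin m → ℝ := fun i => u (Sum.inl i) with hy'
    set x' : Fin n → ℝ := fun j => u (Sum.inr (Sum.inl j)) with hx'
    set lam : ℝ := u (Sum.inr (Sum.inr ())) with hlam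
    have hy'0 : ∀ i, 0 ≤ y' i := fun i => hu0 _
    have hx'0 : ∀ j, 0 ≤ x' j := fun j => hu0 _
    have hlam0 : 0 ≤ lam := hu0 _
    have hcolx : ∀ j, lam * c j ≤ ∑ i, A i j * y' i := by
      intro j
      have h := hucol (Sum.inl j)
      rw [hM'] at h
      simp only [Sum.elim_inl, Sum.elim_inr, Fintype.sum_sum_type, zero_mul,
        Finset.sum_const_zero, neg_mul, Finset.sum_neg_distrib] at h
      have : ∑ i, A i j * y' i = ∑ i, A i j * u (Sum.inl i) := rfl
      simp only [Finset.univ_unique, Finset.sum_singleton] at h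
      nlinarith [h]
    have hcoly : ∀ i, ∑ j, A i j * x' j ≤ lam * b i := by
      intro i
      have h := hucol (Sum.inr i)
      rw [hM'] at h
      simp only [Sum.elim_inl, Sum.elim_inr, Fintype.sum_sum_type, zero_mul,
        Finset.sum_const_zero, neg_mul, Finset.sum_neg_distrib] at h
      simp only [Finset.univ_unique, Finset.sum_singleton] at h
      have : ∑ j, A i j * x' j = ∑ j, A i j * u (Sum.inr (Sum.inl j)) := rfl
      nlinarith [h]
    have hobj : ∑ i, b i * y' i < ∑ j, c j * x' j := by
      have h := huobj
      rw [hd'] at h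
      simp only [Sum.elim_inl, Sum.elim_inr, Fintype.sum_sum_type, zero_mul,
        Finset.sum_const_zero, neg_mul, Finset.sum_neg_distrib,
        Finset.univ_unique, Finset.sum_singleton] at h
      have h1 : ∑ i, b i * y' i = ∑ i, b i * u (Sum.inl i) := rfl
      have h2 : ∑ j, c j * x' j = ∑ j, c j * u (Sum.inr (Sum.inl j)) := rfl
      linarith [h]
    rcases eq_or_lt_of_le hlam0 with hlz | hlp
    · -- lam = 0
      have hAy' : ∀ j, 0 ≤ ∑ i, A i j * y' i := by
        intro j; have := hcolx j; rw [← hlz] at this; simpa using this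
      have hAx' : ∀ i, ∑ j, A i j * x' j ≤ 0 := by
        intro i; have := hcoly i; rw [← hlz] at this; simpa using this
      have h1 : 0 ≤ ∑ i, b i * y' i := by
        have hb1 : ∑ i, (∑ j, A i j * x₀ j) * y' i ≤ ∑ i, b i * y' i :=
          Finset.sum_le_sum fun i _ =>
            mul_le_mul_of_nonneg_right (by rw [← hmul]; exact hx₀A i) (hy'0 i)
        have hb2 : 0 ≤ ∑ j, (∑ i, A i j * y' i) * x₀ j :=
          Finset.sum_nonneg fun j _ => mul_nonneg (hAy' j) (hx₀0 j)
        rw [← sum_swap_mul A x₀ y'] at hb2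
        linarith
      have h2 : ∑ j, c j * x' j ≤ 0 := by
        have hc1 : ∑ j, c j * x' j ≤ ∑ j, (∑ i, A i j * y₀ i) * x' j :=
          Finset.sum_le_sum fun j _ =>
            mul_le_mul_of_nonneg_right (by rw [← hmulT]; exact hy₀A j) (hx'0 j)
        have hc2 : ∑ i, (∑ j, A i j * x' j) * y₀ i ≤ 0 :=
          Finset.sum_nonpos fun i _ =>
            mul_nonpos_of_nonpos_of_nonneg (hAx' i) (hy₀0 i)
        rw [sum_swap_mul A x' y₀] at hc2
        linarith
      linarith
    · -- lam > 0
      set x₁ : Fin n → ℝ := fun j => x' j / lam with hx₁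
      set y₁ : Fin m → ℝ := fun i => y' i / lam with hy₁
      have hx₁0 : ∀ j, 0 ≤ x₁ j := fun j => div_nonneg (hx'0 j) hlam0
      have hy₁0 : ∀ i, 0 ≤ y₁ i := fun i => div_nonneg (hy'0 i) hlam0
      have hx₁A : ∀ i, A.mulVec x₁ i ≤ b i := by
        intro i
        rw [hmul]
        have : ∑ j, A i j * x₁ j = (∑ j, A i j * x' j) / lam := by
          rw [Finset.sum_div]
          exact Finset.sum_congr rfl fun j _ => by rw [hx₁]; ring
        rw [this]
        rw [div_le_iff₀ hlp]
        nlinarith [hcoly i]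
      have hy₁A : ∀ j, c j ≤ Aᵀ.mulVec y₁ j := by
        intro j
        rw [hmulT]
        have : ∑ i, A i j * y₁ i = (∑ i, A i j * y' i) / lam := by
          rw [Finset.sum_div]
          exact Finset.sum_congr rfl fun i _ => by rw [hy₁]; ring
        rw [this, le_div_iff₀ hlp]
        nlinarith [hcolx j]
      have hw := lp_weak_duality A b c hx₁0 hx₁A hy₁0 hy₁A
      simp only [dotProduct] at hw
      have hcx : ∑ j, c j * x₁ j = (∑ j, c j * x' j) / lam := by
        rw [Finset.sum_div]
        exact Finset.sum_congr rfl fun j _ => by rw [hx₁]; ring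
      have hby : ∑ i, b i * y₁ i = (∑ i, b i * y' i) / lam := by
        rw [Finset.sum_div]
        exact Finset.sum_congr rfl fun i _ => by rw [hy₁]; ring
      rw [hcx, hby, div_le_div_iff₀ hlp hlp] at hw
      nlinarith [hobj]
end

section
/- Kantorovich duality (finite case): for finite sets X, Y with probability vectors μ on X and ν on Y and a cost function c : X × Y → ℝ, the minimum of ∑ c(x,y) π(x,y) over all couplings π of μ and ν equals the maximum of ∑ φ(x) μ(x) + ∑ ψ(y) ν(y) over all functions φ : X → ℝ, ψ : Y → ℝ satisfying φ(x) + ψ(y) ≤ c(x,y) for all x, y. -/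
/-!
Both optima are attained by compactness. Couplings form a compact set. On the dual side, replacing
an admissible pair `(φ, ψ)` by `(cTransform c ψ₁, ψ₁)` with `ψ₁ = cTransform (flip c) φ` only raises
the dual value; since `μ` and `ν` have mass one we may shift `ψ₁` to vanish at a point, and then
`‖ψ₁‖ ≤ 2‖c‖`, so it suffices to maximize a continuous function over a closed ball.

Weak duality is `∑ (φ x + ψ y) π x y ≤ ∑ c x y π x y`. Conversely, if `d` is below the optimal
cost, the vector `(μ, ν, d)` is not the (marginals, cost) of any `0 ≤ π ≤ 1`. A separating
hyperplane has a negative cost coefficient (test it on an optimal coupling), and testing it on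
point masses and rescaling gives an admissible pair of dual value above `d`.
-/

open Finset Matrix

section Transport

variable {X Y : Type*} [Fintype X] [Fintype Y]

def IsCoupling (μ : X → ℝ) (ν : Y → ℝ) (π : X → Y → ℝ) : Prop :=
  (∀ x y, 0 ≤ π x y) ∧ (∀ x, ∑ y, π x y = μ x) ∧ (∀ y, ∑ x, π x y = ν y)

def transportCost (c π : X → Y → ℝ) : ℝ := ∑ x, ∑ y, c x y * π x y

def dualValue (μ : X → ℝ) (ν : Y → ℝ) (φ : X → ℝ) (ψ : Y → ℝ) : ℝ :=
  ∑ x, φ x * μ x + ∑ y, ψ y * ν y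

variable {μ : X → ℝ} {ν : Y → ℝ} {c π : X → Y → ℝ} {φ : X → ℝ} {ψ : Y → ℝ}

theorem IsCoupling.transportCost_add_eq_dualValue (hπ : IsCoupling μ ν π) (φ : X → ℝ)
    (ψ : Y → ℝ) : transportCost (fun x y => φ x + ψ y) π = dualValue μ ν φ ψ := by
  simp only [transportCost, dualValue, add_mul, sum_add_distrib, ← mul_sum, hπ.2.1]
  rw [sum_comm]
  simp only [← mul_sum, hπ.2.2]

theorem transportCost_mono {c' : X → Y → ℝ} (hπ : ∀ x y, 0 ≤ π x y)
    (h : ∀ x y, c x y ≤ c' x y) : transportCost c π ≤ transportCost c' π :=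
  sum_le_sum fun x _ => sum_le_sum fun y _ => mul_le_mul_of_nonneg_right (h x y) (hπ x y)

theorem dualValue_le_transportCost (hπ : IsCoupling μ ν π) (h : ∀ x y, φ x + ψ y ≤ c x y) :
    dualValue μ ν φ ψ ≤ transportCost c π :=
  hπ.transportCost_add_eq_dualValue φ ψ ▸ transportCost_mono hπ.1 h

theorem dualValue_mono {φ' : X → ℝ} {ψ' : Y → ℝ} (hμ : ∀ x, 0 ≤ μ x) (hν : ∀ y, 0 ≤ ν y)
    (hφ : φ ≤ φ') (hψ : ψ ≤ ψ') : dualValue μ ν φ ψ ≤ dualValue μ ν φ' ψ' :=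
  add_le_add (sum_le_sum fun x _ => mul_le_mul_of_nonneg_right (hφ x) (hμ x))
    (sum_le_sum fun y _ => mul_le_mul_of_nonneg_right (hψ y) (hν y))

theorem dualValue_add_sub_const (hμ : ∑ x, μ x = 1) (hν : ∑ y, ν y = 1) (k : ℝ) :
    dualValue μ ν (fun x => φ x + k) (fun y => ψ y - k) = dualValue μ ν φ ψ := by
  simp only [dualValue, add_mul, sub_mul, sum_add_distrib, sum_sub_distrib, ← mul_sum, hμ, hν]
  ring

theorem isCoupling_mul (hμ0 : ∀ x, 0 ≤ μ x) (hμ1 : ∑ x, μ x = 1) (hν0 : ∀ y, 0 ≤ ν y)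
    (hν1 : ∑ y, ν y = 1) : IsCoupling μ ν fun x y => μ x * ν y :=
  ⟨fun x y => mul_nonneg (hμ0 x) (hν0 y), fun x => by rw [← mul_sum, hν1, mul_one],
    fun y => by rw [← sum_mul, hμ1, one_mul]⟩

theorem IsCoupling.le_left (hπ : IsCoupling μ ν π) (x : X) (y : Y) : π x y ≤ μ x :=
  hπ.2.1 x ▸ single_le_sum (fun y _ => hπ.1 x y) (mem_univ y)

theorem isCompact_setOf_isCoupling (μ : X → ℝ) (ν : Y → ℝ) :
    IsCompact {π | IsCoupling μ ν π} := by
  have hclosed : IsClosed {π | IsCoupling μ ν π} := by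
    simp only [IsCoupling, Set.ofPred_and, Set.ofPred_forall]
    refine .inter (isClosed_iInter fun x => isClosed_iInter fun y =>
      isClosed_le continuous_const (by fun_prop)) (.inter ?_ ?_) <;>
    exact isClosed_iInter fun _ => isClosed_eq (by fun_prop) continuous_const
  refine (isCompact_univ_pi fun x => isCompact_univ_pi fun _ => isCompact_Icc (a := 0) (b := μ x))
    |>.of_isClosed_subset hclosed fun π hπ => ?_
  simp only [Set.mem_univ_pi]
  exact fun x y => ⟨hπ.1 x y, hπ.le_left x y⟩

theorem continuous_transportCost (c : X → Y → ℝ) : Continuous (transportCost c) := by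
  unfold transportCost
  fun_prop

theorem exists_isMinOn_transportCost (c : X → Y → ℝ) (hμ0 : ∀ x, 0 ≤ μ x)
    (hμ1 : ∑ x, μ x = 1) (hν0 : ∀ y, 0 ≤ ν y) (hν1 : ∑ y, ν y = 1) :
    ∃ π ∈ {π | IsCoupling μ ν π}, IsMinOn (transportCost c) {π | IsCoupling μ ν π} π :=
  (isCompact_setOf_isCoupling μ ν).exists_isMinOn ⟨_, isCoupling_mul hμ0 hμ1 hν0 hν1⟩
    (continuous_transportCost c).continuousOn

end Transport

section cTransform

variable {α β : Type*}

noncomputable def cTransform (c : α → β → ℝ) (ψ : β → ℝ) (x : α) : ℝ := ⨅ y, c x y - ψ y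

variable {c : α → β → ℝ} {φ : α → ℝ} {ψ : β → ℝ}

theorem cTransform_add_le [Finite β] (x : α) (y : β) : cTransform c ψ x + ψ y ≤ c x y :=
  le_sub_iff_add_le.1 (ciInf_le (Set.finite_range _).bddBelow y)

theorem le_cTransform [Nonempty β] (h : ∀ x y, φ x + ψ y ≤ c x y) : φ ≤ cTransform c ψ :=
  fun x => le_ciInf fun y => le_sub_iff_add_le.2 (h x y)

theorem cTransform_sub_const [Finite β] [Nonempty β] (k : ℝ) :
    cTransform c (fun y => ψ y - k) = fun x => cTransform c ψ x + k := by
  ext x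
  rw [cTransform, cTransform, ciInf_add (Set.finite_range _).bddBelow]
  simp only [sub_sub_eq_add_sub, add_sub_right_comm]

theorem cTransform_le_cTransform_add [Finite β] [Nonempty β] {x x' : α} {d : ℝ}
    (h : ∀ y, c x y ≤ c x' y + d) : cTransform c ψ x ≤ cTransform c ψ x' + d := by
  rw [cTransform, cTransform, ciInf_add (Set.finite_range _).bddBelow]
  exact ciInf_mono (Set.finite_range _).bddBelow fun y => by linarith [h y]

theorem continuous_cTransform [Fintype β] [Nonempty β] (c : α → β → ℝ) :
    Continuous (cTransform c) := by
  refine continuous_pi fun x => ?_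
  simp only [cTransform, ← Finset.inf'_univ_eq_ciInf]
  exact Continuous.finset_inf'_apply _ fun y _ => by fun_prop

end cTransform

section Duality

variable {X Y : Type*} [Fintype X] [Fintype Y] {μ : X → ℝ} {ν : Y → ℝ}

theorem exists_forall_dualValue_le (c : X → Y → ℝ) (hμ0 : ∀ x, 0 ≤ μ x) (hμ1 : ∑ x, μ x = 1)
    (hν0 : ∀ y, 0 ≤ ν y) (hν1 : ∑ y, ν y = 1) :
    ∃ (φ : X → ℝ) (ψ : Y → ℝ), (∀ x y, φ x + ψ y ≤ c x y) ∧
      ∀ (φ' : X → ℝ) (ψ' : Y → ℝ), (∀ x y, φ' x + ψ' y ≤ c x y) →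
        dualValue μ ν φ' ψ' ≤ dualValue μ ν φ ψ := by
  obtain ⟨x₀, -, -⟩ := exists_ne_zero_of_sum_ne_zero (hμ1 ▸ one_ne_zero)
  obtain ⟨y₀, -, -⟩ := exists_ne_zero_of_sum_ne_zero (hν1 ▸ one_ne_zero)
  have : Nonempty X := ⟨x₀⟩
  have : Nonempty Y := ⟨y₀⟩
  have hc : ∀ x y, |c x y| ≤ ‖c‖ := fun x y =>
    (norm_le_pi_norm (c x) y).trans (norm_le_pi_norm c x)
  have hF : Continuous fun ψ => dualValue μ ν (cTransform c ψ) ψ := by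
    have := continuous_cTransform c
    unfold dualValue
    fun_prop
  obtain ⟨ψ, -, hψ⟩ := (isCompact_closedBall (0 : Y → ℝ) (2 * ‖c‖)).exists_isMaxOn
    ⟨0, by simp⟩ hF.continuousOn
  refine ⟨cTransform c ψ, ψ, cTransform_add_le, fun φ' ψ' h => ?_⟩
  set ψ₁ := cTransform (flip c) φ'
  have h₁ : ∀ x y, φ' x + ψ₁ y ≤ c x y := fun x y =>
    (add_comm _ _).trans_le (cTransform_add_le (c := flip c) y x)
  have hψ₁ : ψ' ≤ ψ₁ := le_cTransform fun y x => (add_comm _ _).trans_le (h x y)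
  have hosc : ∀ y y', ψ₁ y ≤ ψ₁ y' + 2 * ‖c‖ := fun y y' =>
    cTransform_le_cTransform_add fun x => show c x y ≤ c x y' + 2 * ‖c‖ by
      linarith [abs_le.1 (hc x y), abs_le.1 (hc x y')]
  have hψ₂ : (fun y => ψ₁ y - ψ₁ y₀) ∈ Metric.closedBall 0 (2 * ‖c‖) := by
    rw [mem_closedBall_zero_iff, pi_norm_le_iff_of_nonneg (by positivity)]
    exact fun y => abs_sub_le_iff.2 ⟨by linarith [hosc y y₀], by linarith [hosc y₀ y]⟩
  calc dualValue μ ν φ' ψ' ≤ dualValue μ ν (cTransform c ψ₁) ψ₁ :=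
        dualValue_mono hμ0 hν0 (le_cTransform h₁) hψ₁
    _ = dualValue μ ν (cTransform c fun y => ψ₁ y - ψ₁ y₀) fun y => ψ₁ y - ψ₁ y₀ := by
        simp only [cTransform_sub_const, dualValue_add_sub_const hμ1 hν1]
    _ ≤ dualValue μ ν (cTransform c ψ) ψ := hψ hψ₂

end Duality

theorem exists_dotProduct_lt_of_notMem {ι : Type*} [Fintype ι] {K : Set (ι → ℝ)}
    (hconv : Convex ℝ K) (hclosed : IsClosed K) {p : ι → ℝ} (hp : p ∉ K) :
    ∃ (w : ι → ℝ) (u : ℝ), (∀ k ∈ K, w ⬝ᵥ k < u) ∧ u < w ⬝ᵥ p := by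
  classical
  obtain ⟨f, u, hK, hfp⟩ := geometric_hahn_banach_closed_point hconv hclosed hp
  have hf : ∀ v, f v = (fun i => f fun j => if i = j then 1 else 0) ⬝ᵥ v := fun v => by
    rw [← f.coe_coe, (f : (ι → ℝ) →ₗ[ℝ] ℝ).pi_apply_eq_sum_univ v]
    simp only [dotProduct, smul_eq_mul, mul_comm, ContinuousLinearMap.coe_coe]
  exact ⟨_, u, fun k hk => hf k ▸ hK k hk, hf p ▸ hfp⟩

section Moments

variable {X Y : Type*}

/-- `(μ, ν, r)` as a single coordinate vector, so that separating functionals are dot products. -/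
def momentVector (μ : X → ℝ) (ν : Y → ℝ) (r : ℝ) : Option (X ⊕ Y) → ℝ :=
  fun i => i.elim r (Sum.elim μ ν)

theorem momentVector_inj {μ μ' : X → ℝ} {ν ν' : Y → ℝ} {r r' : ℝ} :
    momentVector μ ν r = momentVector μ' ν' r' ↔ μ = μ' ∧ ν = ν' ∧ r = r' := by
  refine ⟨fun h => ⟨funext fun x => congrFun h (some (.inl x)),
    funext fun y => congrFun h (some (.inr y)), congrFun h none⟩, ?_⟩
  rintro ⟨rfl, rfl, rfl⟩
  rfl

theorem dotProduct_momentVector [Fintype X] [Fintype Y] (w : Option (X ⊕ Y) → ℝ) (μ : X → ℝ)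
    (ν : Y → ℝ) (r : ℝ) : w ⬝ᵥ momentVector μ ν r =
      dualValue μ ν (fun x => w (some (.inl x))) (fun y => w (some (.inr y))) + w none * r := by
  simp only [dotProduct, momentVector, dualValue, Fintype.sum_option, Fintype.sum_sum_type,
    Option.elim_none, Option.elim_some, Sum.elim_inl, Sum.elim_inr]
  ring

def transportMoments [Fintype X] [Fintype Y] (c : X → Y → ℝ) :
    (X → Y → ℝ) →ₗ[ℝ] Option (X ⊕ Y) → ℝ where
  toFun π := momentVector (fun x => ∑ y, π x y) (fun y => ∑ x, π x y) (transportCost c π)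
  map_add' π π' := by
    ext (_ | x | y) <;> simp [momentVector, transportCost, sum_add_distrib, mul_add]
  map_smul' a π := by
    ext (_ | x | y) <;> simp [momentVector, transportCost, mul_sum, mul_left_comm]

theorem transportMoments_apply [Fintype X] [Fintype Y] (c π : X → Y → ℝ) :
    transportMoments c π =
      momentVector (fun x => ∑ y, π x y) (fun y => ∑ x, π x y) (transportCost c π) :=
  rfl

end Moments

section StrongDuality

variable {X Y : Type*} [Fintype X] [Fintype Y] {μ : X → ℝ} {ν : Y → ℝ} {c π : X → Y → ℝ}

theorem exists_dualValue_gt_of_lt_transportCost (hμ1 : ∑ x, μ x = 1) (hπ : IsCoupling μ ν π)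
    (hmin : IsMinOn (transportCost c) {π | IsCoupling μ ν π} π) {d : ℝ}
    (hd : d < transportCost c π) :
    ∃ (φ : X → ℝ) (ψ : Y → ℝ), (∀ x y, φ x + ψ y ≤ c x y) ∧ d < dualValue μ ν φ ψ := by
  classical
  set box : Set (X → Y → ℝ) := Set.Icc 0 1
  have hbox : ∀ {π'}, π' ∈ box ↔ ∀ x y, 0 ≤ π' x y ∧ π' x y ≤ 1 := by
    simp [box, Pi.le_def, forall_and]
  have hnot : momentVector μ ν d ∉ transportMoments c '' box := by
    rintro ⟨π', hπ'box, hπ'⟩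
    obtain ⟨hrow, hcol, hcost⟩ := momentVector_inj.1 hπ'
    have := hmin (show IsCoupling μ ν π' from
      ⟨fun x y => (hbox.1 hπ'box x y).1, congrFun hrow, congrFun hcol⟩)
    simp only [Set.mem_ofPred_eq] at this
    linarith
  obtain ⟨w, u, hK, hu⟩ := exists_dotProduct_lt_of_notMem ((convex_Icc 0 1).linear_image _)
    (isCompact_Icc.image (LinearMap.continuous_of_finiteDimensional _)).isClosed hnot
  simp only [Set.forall_mem_image, transportMoments_apply, dotProduct_momentVector] at hK hu
  set φ := fun x => w (some (.inl x))
  set ψ := fun y => w (some (.inr y))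
  set a := w none
  have hμ0 : ∀ x, 0 ≤ μ x := fun x => hπ.2.1 x ▸ sum_nonneg fun y _ => hπ.1 x y
  have hπbox : π ∈ box := hbox.2 fun x y =>
    ⟨hπ.1 x y, (hπ.le_left x y).trans (hμ1 ▸ single_le_sum (fun x _ => hμ0 x) (mem_univ x))⟩
  have ha : a < 0 := by
    have := hK hπbox
    rw [funext hπ.2.1, funext hπ.2.2] at this
    nlinarith
  have hpt : ∀ x y, φ x + ψ y + a * c x y < u := fun x y => by
    have := @hK (Pi.single x (Pi.single y 1)) (hbox.2 fun x' y' => by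
      by_cases hx : x' = x <;> by_cases hy : y' = y <;> simp [hx, hy])
    simpa [dualValue, transportCost, Pi.single_apply, ite_apply] using this
  refine ⟨fun x => (φ x - u) / -a, fun y => ψ y / -a, fun x y => ?_, ?_⟩
  · rw [← add_div, div_le_iff₀ (neg_pos.2 ha)]
    linarith [hpt x y]
  · have : dualValue μ ν (fun x => (φ x - u) / -a) (fun y => ψ y / -a) =
        (dualValue μ ν φ ψ - u) / -a := by
      simp only [dualValue, div_mul_eq_mul_div, ← sum_div, sub_mul, sum_sub_distrib, ← mul_sum,
        hμ1]
      ring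
    rw [this, lt_div_iff₀ (neg_pos.2 ha)]
    linarith

end StrongDuality

/-- Kantorovich duality in the finite case: the minimal transport cost over
couplings of μ and ν equals the maximal value of the dual potentials. -/
theorem kantorovich_duality_finite {X Y : Type*} [Fintype X] [Fintype Y]
    (μ : X → ℝ) (ν : Y → ℝ) (c : X → Y → ℝ)
    (hμ0 : ∀ x, 0 ≤ μ x) (hμ1 : ∑ x, μ x = 1)
    (hν0 : ∀ y, 0 ≤ ν y) (hν1 : ∑ y, ν y = 1) :
    ∃ (π : X → Y → ℝ) (φ : X → ℝ) (ψ : Y → ℝ),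
      ((∀ x y, 0 ≤ π x y) ∧ (∀ x, ∑ y, π x y = μ x) ∧ (∀ y, ∑ x, π x y = ν y)) ∧
      (∀ x y, φ x + ψ y ≤ c x y) ∧
      (∀ π' : X → Y → ℝ,
        ((∀ x y, 0 ≤ π' x y) ∧ (∀ x, ∑ y, π' x y = μ x) ∧ (∀ y, ∑ x, π' x y = ν y)) →
        ∑ x, ∑ y, c x y * π x y ≤ ∑ x, ∑ y, c x y * π' x y) ∧
      (∀ (φ' : X → ℝ) (ψ' : Y → ℝ), (∀ x y, φ' x + ψ' y ≤ c x y) →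
        ∑ x, φ' x * μ x + ∑ y, ψ' y * ν y ≤ ∑ x, φ x * μ x + ∑ y, ψ y * ν y) ∧
      ∑ x, ∑ y, c x y * π x y = ∑ x, φ x * μ x + ∑ y, ψ y * ν y := by
  obtain ⟨π, hπ, hmin⟩ := exists_isMinOn_transportCost c hμ0 hμ1 hν0 hν1
  obtain ⟨φ, ψ, hadm, hmax⟩ := exists_forall_dualValue_le c hμ0 hμ1 hν0 hν1
  refine ⟨π, φ, ψ, hπ, hadm, fun π' hπ' => hmin hπ', hmax,
    le_antisymm ?_ (dualValue_le_transportCost hπ hadm)⟩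
  by_contra! hgap
  obtain ⟨φ', ψ', hadm', hgt⟩ := exists_dualValue_gt_of_lt_transportCost hμ1 hπ hmin hgap
  exact (hmax φ' ψ' hadm').not_gt hgt
end

section
/- Existence of Nash equilibrium in finite two-player zero-sum games via minimax (von Neumann minimax theorem): for any real m × n payoff matrix A, max over mixed strategies x of the minimum over mixed strategies y of xᵀAy equals min over y of max over x of xᵀAy. -/
/-!
The payoff `(x, y) ↦ xᵀAy` is continuous and linear in each variable and the simplices are
nonempty, compact and convex, so Sion's minimax theorem yields a saddle point `(x₀, y₀)`.
At a saddle point the max-min, the min-max and both partial optima all equal `x₀ᵀAy₀`;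
compactness bounds the payoff, which is what the conditionally complete `⨆`/`⨅` on `ℝ` need.
-/

open scoped Matrix

theorem ciSup_ciInf_eq_ciInf_ciSup_of_saddle {ι κ β : Type*} [ConditionallyCompleteLattice β]
    {f : ι → κ → β} {x₀ : ι} {y₀ : κ} (hsaddle : ∀ x y, f x y₀ ≤ f x₀ y)
    (hbddBelow : ∀ x, BddBelow (Set.range (f x)))
    (hbddAbove : ∀ y, BddAbove (Set.range (f · y))) :
    (⨅ y, f x₀ y) = f x₀ y₀ ∧ (⨆ x, f x y₀) = f x₀ y₀ ∧
      (⨆ x, ⨅ y, f x y) = f x₀ y₀ ∧ (⨅ y, ⨆ x, f x y) = f x₀ y₀ := by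
  have : Nonempty ι := ⟨x₀⟩
  have : Nonempty κ := ⟨y₀⟩
  have hinf : (⨅ y, f x₀ y) = f x₀ y₀ :=
    le_antisymm (ciInf_le (hbddBelow x₀) y₀) (le_ciInf (hsaddle x₀))
  have hsup : (⨆ x, f x y₀) = f x₀ y₀ :=
    le_antisymm (ciSup_le (hsaddle · y₀)) (le_ciSup (hbddAbove y₀) x₀)
  have hinf_le x : (⨅ y, f x y) ≤ f x₀ y₀ := (ciInf_le (hbddBelow x) y₀).trans (hsaddle x y₀)
  have hle_sup y : f x₀ y₀ ≤ ⨆ x, f x y := (hsaddle x₀ y).trans (le_ciSup (hbddAbove y) x₀)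
  refine ⟨hinf, hsup, le_antisymm (ciSup_le hinf_le) ?_, le_antisymm ?_ (le_ciInf hle_sup)⟩
  · exact hinf.ge.trans (le_ciSup ⟨_, Set.forall_mem_range.2 hinf_le⟩ x₀)
  · exact (ciInf_le ⟨_, Set.forall_mem_range.2 hle_sup⟩ y₀).trans hsup.le

theorem Matrix.exists_isSaddlePointOn_dotProduct_mulVec {ι κ : Type*} [Fintype ι] [Fintype κ]
    (A : Matrix ι κ ℝ) {X : Set (κ → ℝ)} {Y : Set (ι → ℝ)}
    (hXne : X.Nonempty) (hXconv : Convex ℝ X) (hXcpt : IsCompact X)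
    (hYne : Y.Nonempty) (hYconv : Convex ℝ Y) (hYcpt : IsCompact Y) :
    ∃ y₀ ∈ X, ∃ x₀ ∈ Y, IsSaddlePointOn X Y (fun y x ↦ x ⬝ᵥ A *ᵥ y) y₀ x₀ := by
  refine Sion.exists_isSaddlePointOn hXne hXconv hXcpt (fun x _ ↦ ?_) (fun x _ ↦ ?_)
    hYconv hYne hYcpt (fun y _ ↦ ?_) (fun y _ ↦ ?_)
  · exact (Continuous.continuousOn (by fun_prop)).lowerSemicontinuousOn
  · exact (((dotProductBilin ℝ ℝ x).comp A.mulVecLin).convexOn hXconv).quasiconvexOn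
  · exact (Continuous.continuousOn (by fun_prop)).upperSemicontinuousOn
  · exact (((dotProductBilin ℝ ℝ).flip (A *ᵥ y)).concaveOn hYconv).quasiconcaveOn

/-- Von Neumann's minimax theorem for finite two-player zero-sum games:
`sup_x inf_y xᵀAy = inf_y sup_x xᵀAy` over mixed strategies, both attained. -/
theorem von_neumann_minimax {m n : ℕ} (hm : 0 < m) (hn : 0 < n)
    (A : Matrix (Fin m) (Fin n) ℝ) :
    (⨆ x : stdSimplex ℝ (Fin m), ⨅ y : stdSimplex ℝ (Fin n),
        (x : Fin m → ℝ) ⬝ᵥ A.mulVec (y : Fin n → ℝ)) =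
      (⨅ y : stdSimplex ℝ (Fin n), ⨆ x : stdSimplex ℝ (Fin m),
        (x : Fin m → ℝ) ⬝ᵥ A.mulVec (y : Fin n → ℝ)) ∧
    (∃ x₀ : stdSimplex ℝ (Fin m),
      (⨅ y : stdSimplex ℝ (Fin n), (x₀ : Fin m → ℝ) ⬝ᵥ A.mulVec (y : Fin n → ℝ)) =
        ⨆ x : stdSimplex ℝ (Fin m), ⨅ y : stdSimplex ℝ (Fin n),
          (x : Fin m → ℝ) ⬝ᵥ A.mulVec (y : Fin n → ℝ)) ∧
    (∃ y₀ : stdSimplex ℝ (Fin n),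
      (⨆ x : stdSimplex ℝ (Fin m), (x : Fin m → ℝ) ⬝ᵥ A.mulVec (y₀ : Fin n → ℝ)) =
        ⨅ y : stdSimplex ℝ (Fin n), ⨆ x : stdSimplex ℝ (Fin m),
          (x : Fin m → ℝ) ⬝ᵥ A.mulVec (y : Fin n → ℝ)) := by
  obtain ⟨y₀, hy₀, x₀, hx₀, hsaddle⟩ := A.exists_isSaddlePointOn_dotProduct_mulVec
    ⟨_, single_mem_stdSimplex ℝ (⟨0, hn⟩ : Fin n)⟩ (convex_stdSimplex ℝ _)
    (isCompact_stdSimplex ℝ _)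
    ⟨_, single_mem_stdSimplex ℝ (⟨0, hm⟩ : Fin m)⟩ (convex_stdSimplex ℝ _)
    (isCompact_stdSimplex ℝ _)
  set payoff : stdSimplex ℝ (Fin m) → stdSimplex ℝ (Fin n) → ℝ :=
    fun x y ↦ (x : Fin m → ℝ) ⬝ᵥ A *ᵥ (y : Fin n → ℝ)
  have hcont : Continuous (Function.uncurry payoff) := by fun_prop
  obtain ⟨hx₀val, hy₀val, hmaxmin, hminmax⟩ :=
    ciSup_ciInf_eq_ciInf_ciSup_of_saddle (f := payoff) (x₀ := ⟨x₀, hx₀⟩) (y₀ := ⟨y₀, hy₀⟩)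
      (fun x y ↦ hsaddle y y.2 x x.2)
      (fun x ↦ (isCompact_range (hcont.comp (Continuous.prodMk_right x))).bddBelow)
      (fun y ↦ (isCompact_range (hcont.comp (Continuous.prodMk_left y))).bddAbove)
  exact ⟨hmaxmin.trans hminmax.symm, ⟨_, hx₀val.trans hmaxmin.symm⟩,
    ⟨_, hy₀val.trans hminmax.symm⟩⟩
end

section
/- Nonemptiness of the core for convex (supermodular) games: if a TU game (N, v) satisfies v(S ∪ T) + v(S ∩ T) ≥ v(S) + v(T) for all coalitions S, T, then its core is nonempty; in particular, the marginal-contribution vector along any ordering of the players lies in the core. -/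
/-!
Along an ordering `σ`, the marginal contributions telescope to `v univ - v ∅`. For the core
inequality, add the players of `S` in the order `σ`: when `a` joins the players of `S` before it,
its gain is at most its gain on joining all its predecessors, since supermodularity makes
marginal contributions increase with the coalition joined.
-/

open Finset

/-- The marginal-contribution vector of a convex (supermodular) TU game along the
ordering `σ`. -/
noncomputable def marginalVector {ι : Type*} [Fintype ι] [DecidableEq ι]
    (v : Finset ι → ℝ) (σ : Fin (Fintype.card ι) ≃ ι) (i : ι) : ℝ :=
  v (Finset.univ.filter fun j => σ.symm j ≤ σ.symm i) -
    v (Finset.univ.filter fun j => σ.symm j < σ.symm i)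

section

variable {ι : Type*} [DecidableEq ι]

theorem insert_sub_le_insert_sub_of_supermodular {v : Finset ι → ℝ}
    (hsup : ∀ S T : Finset ι, v S + v T ≤ v (S ∪ T) + v (S ∩ T))
    {s t : Finset ι} {a : ι} (hst : s ⊆ t) (hat : a ∉ t) :
    v (insert a s) - v s ≤ v (insert a t) - v t := by
  have hunion : insert a s ∪ t = insert a t := by
    rw [insert_union, union_eq_right.mpr hst]
  have hinter : insert a s ∩ t = s := by
    rw [insert_inter_of_notMem hat, inter_eq_left.mpr hst]
  have := hsup (insert a s) t
  rw [hunion, hinter] at this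
  linarith

variable [Fintype ι]

theorem insert_filter_lt_eq_filter_le (σ : Fin (Fintype.card ι) ≃ ι) (i : ι) :
    insert i (univ.filter fun j => σ.symm j < σ.symm i) =
      univ.filter fun j => σ.symm j ≤ σ.symm i := by
  ext j
  simp only [mem_insert, mem_filter, mem_univ, true_and, le_iff_eq_or_lt,
    σ.symm.injective.eq_iff]

theorem marginalVector_eq_insert_sub (v : Finset ι → ℝ) (σ : Fin (Fintype.card ι) ≃ ι)
    (i : ι) :
    marginalVector v σ i =
      v (insert i (univ.filter fun j => σ.symm j < σ.symm i)) -
        v (univ.filter fun j => σ.symm j < σ.symm i) := by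
  rw [insert_filter_lt_eq_filter_le, marginalVector]

theorem sum_marginalVector (v : Finset ι → ℝ) (σ : Fin (Fintype.card ι) ≃ ι) :
    ∑ i, marginalVector v σ i = v univ - v ∅ := by
  set initial : ℕ → Finset ι := fun k => univ.filter fun i => (σ.symm i : ℕ) < k
  have hstep : ∀ j, marginalVector v σ (σ j) = v (initial (j + 1)) - v (initial j) := by
    intro j
    simp only [marginalVector, initial, σ.symm_apply_apply, Fin.le_def, Fin.lt_def,
      Nat.lt_succ_iff]
  have hall : initial (Fintype.card ι) = univ := by
    ext i
    simp [initial]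
  have hnone : initial 0 = ∅ := by
    ext i
    simp [initial]
  rw [← σ.sum_comp, Finset.sum_congr rfl fun j _ => hstep j,
    Fin.sum_univ_eq_sum_range (fun k => v (initial (k + 1)) - v (initial k)),
    sum_range_sub (fun k => v (initial k)), hall, hnone]

theorem sub_le_sum_marginalVector {v : Finset ι → ℝ}
    (hsup : ∀ S T : Finset ι, v S + v T ≤ v (S ∪ T) + v (S ∩ T))
    (σ : Fin (Fintype.card ι) ≃ ι) (S : Finset ι) :
    v S - v ∅ ≤ ∑ i ∈ S, marginalVector v σ i := by
  induction S using Finset.induction_on_max_value σ.symm with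
  | empty => simp
  | insert a s has hmax ih =>
    have hpred : s ⊆ univ.filter fun j => σ.symm j < σ.symm a := fun j hj =>
      mem_filter.mpr ⟨mem_univ j, (hmax j hj).lt_of_ne
        fun h => has (σ.symm.injective h ▸ hj)⟩
    have hgain := insert_sub_le_insert_sub_of_supermodular hsup hpred
      (by simp : a ∉ univ.filter fun j => σ.symm j < σ.symm a)
    rw [← marginalVector_eq_insert_sub] at hgain
    rw [sum_insert has]
    linarith

end

/-- Convex (supermodular) games have a nonempty core; moreover every
marginal-contribution vector lies in the core. -/
theorem convex_game_core_nonempty {ι : Type*} [Fintype ι] [DecidableEq ι]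
    (v : Finset ι → ℝ) (hv0 : v ∅ = 0)
    (hsup : ∀ S T : Finset ι, v S + v T ≤ v (S ∪ T) + v (S ∩ T)) :
    (∃ x : ι → ℝ, ∑ i, x i = v Finset.univ ∧ ∀ S : Finset ι, v S ≤ ∑ i ∈ S, x i) ∧
    ∀ σ : Fin (Fintype.card ι) ≃ ι,
      (∑ i, marginalVector v σ i = v Finset.univ ∧
        ∀ S : Finset ι, v S ≤ ∑ i ∈ S, marginalVector v σ i) := by
  have hcore : ∀ σ : Fin (Fintype.card ι) ≃ ι,
      ∑ i, marginalVector v σ i = v univ ∧ ∀ S, v S ≤ ∑ i ∈ S, marginalVector v σ i :=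
    fun σ => ⟨by rw [sum_marginalVector, hv0, sub_zero], fun S => by
      simpa [hv0] using sub_le_sum_marginalVector hsup σ S⟩
  exact ⟨⟨_, hcore (Fintype.equivFin ι).symm⟩, hcore⟩
end
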